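/- The set X = {(x,y,z) ∈ ℂ³ : x⁴ + y⁴ + z⁴ = 0} is Lipschitz Normally Embedded. -/

import Mathlib

open scoped ENNReal

/-- The inner distance on a subset `X` of a (pseudo-e)metric space: the infimum of the
lengths (total variations) of continuous paths `γ : [0,1] → X` joining `x` to `y`. -/
noncomputable def innerDist {E : Type*} [PseudoEMetricSpace E] (X : Set E) (x y : E) : ℝ≥0∞ :=
  ⨅ (γ : ℝ → E) (_ : ContinuousOn γ (Set.Icc 0 1))
    (_ : Set.MapsTo γ (Set.Icc 0 1) X) (_ : γ 0 = x) (_ : γ 1 = y),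
    eVariationOn γ (Set.Icc 0 1)

/-- A subset `X` of a normed space is Lipschitz Normally Embedded (LNE) if there is a
constant `K ≥ 1` such that `d_i(x,y) ≤ K‖x − y‖` for all `x, y ∈ X`. -/
def IsLNE {E : Type*} [NormedAddCommGroup E] (X : Set E) : Prop :=
  ∃ K : ℝ, 1 ≤ K ∧ ∀ x ∈ X, ∀ y ∈ X, innerDist X x y ≤ ENNReal.ofReal (K * ‖x - y‖)

open scoped NNReal
open Set

lemma evar_le {E : Type*} [PseudoEMetricSpace E] {f : ℝ → E} {C : ℝ≥0}
    (h : LipschitzOnWith C f (Set.Icc 0 1)) :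
    eVariationOn f (Set.Icc 0 1) ≤ (C : ℝ≥0∞) := by
  have h1 : eVariationOn (f ∘ id) (Set.Icc (0:ℝ) 1) ≤ C * eVariationOn id (Set.Icc (0:ℝ) 1) :=
    h.comp_eVariationOn_le (Set.mapsTo_id _)
  have hmono : MonotoneOn (id : ℝ → ℝ) (Set.Icc 0 1) := fun a _ b _ hab => hab
  have h2 := hmono.eVariationOn_le (Set.left_mem_Icc.2 zero_le_one)
    (Set.right_mem_Icc.2 zero_le_one)
  simp only [Set.inter_self, id_eq] at h2
  calc eVariationOn f (Set.Icc 0 1) = eVariationOn (f ∘ id) (Set.Icc 0 1) := rfl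
    _ ≤ C * eVariationOn id (Set.Icc 0 1) := h1
    _ ≤ C * ENNReal.ofReal (1 - 0) := by gcongr
    _ = C := by norm_num

lemma innerDist_le_of_lip {E : Type*} [NormedAddCommGroup E] {X : Set E} {x y : E}
    {γ : ℝ → E} {c : ℝ} (hl : LipschitzOnWith c.toNNReal γ (Set.Icc 0 1))
    (hm : Set.MapsTo γ (Set.Icc 0 1) X) (h0 : γ 0 = x) (h1 : γ 1 = y) :
    innerDist X x y ≤ ENNReal.ofReal c := by
  have : innerDist X x y ≤ eVariationOn γ (Set.Icc 0 1) :=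
    iInf_le_of_le γ (iInf_le_of_le hl.continuousOn
      (iInf_le_of_le hm (iInf_le_of_le h0 (iInf_le _ h1))))
  exact this.trans (evar_le hl)

lemma log_lip : ∀ u ∈ Metric.closedBall (1:ℂ) (1/10), ∀ v ∈ Metric.closedBall (1:ℂ) (1/10),
    ‖Complex.log u - Complex.log v‖ ≤ 2 * ‖u - v‖ := by
  have hs : ∀ z ∈ Metric.closedBall (1:ℂ) (1/10), z ∈ Complex.slitPlane := by
    intro z hz
    rw [Metric.mem_closedBall, dist_eq_norm] at hz
    have h1 : |(z - 1).re| ≤ 1/10 := by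
      calc |(z - 1).re| ≤ ‖z - 1‖ := Complex.abs_re_le_norm _
        _ = ‖z - 1‖ := rfl
        _ ≤ 1/10 := hz
    have h2 : (z - 1).re = z.re - 1 := by simp
    rw [h2] at h1
    rw [Complex.mem_slitPlane_iff]
    left
    have := abs_le.mp h1
    linarith [this.1]
  have hnorm : ∀ z ∈ Metric.closedBall (1:ℂ) (1/10), (9:ℝ)/10 ≤ ‖z‖ := by
    intro z hz
    rw [Metric.mem_closedBall, dist_eq_norm] at hz
    have := abs_norm_sub_norm_le z (1:ℂ)
    rw [norm_one] at this
    have := abs_le.mp this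
    linarith [this.1]
  intro u hu v hv
  have h := (convex_closedBall (1:ℂ) (1/10)).norm_image_sub_le_of_norm_hasDerivWithin_le
    (f := Complex.log) (f' := fun z => z⁻¹) (C := 2)
    (fun z hz => (Complex.hasDerivAt_log (hs z hz)).hasDerivWithinAt)
    (fun z hz => by
      rw [norm_inv]
      have h9 := hnorm z hz
      have h0 : (0:ℝ) < ‖z‖ := by linarith
      rw [inv_le_comm₀ (by linarith) (by norm_num)]
      linarith) hv hu
  exact h

lemma exp_lip : ∀ u ∈ Metric.closedBall (0:ℂ) (1/10), ∀ v ∈ Metric.closedBall (0:ℂ) (1/10),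
    ‖Complex.exp u - Complex.exp v‖ ≤ 3 * ‖u - v‖ := by
  intro u hu v hv
  have h := (convex_closedBall (0:ℂ) (1/10)).norm_image_sub_le_of_norm_hasDerivWithin_le
    (f := Complex.exp) (f' := fun z => Complex.exp z) (C := 3)
    (fun z _ => (Complex.hasDerivAt_exp z).hasDerivWithinAt)
    (fun z hz => by
      rw [Metric.mem_closedBall, dist_zero_right] at hz
      rw [Complex.norm_exp]
      have hre : z.re ≤ 1/10 := by
        calc z.re ≤ |z.re| := le_abs_self _
          _ ≤ ‖z‖ := Complex.abs_re_le_norm _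
          _ = ‖z‖ := rfl
          _ ≤ 1/10 := hz
      calc Real.exp z.re ≤ Real.exp 1 := Real.exp_le_exp.2 (by linarith)
        _ ≤ 3 := by linarith [Real.exp_one_lt_d9.le]) hv hu
  exact h

set_option maxHeartbeats 1000000 in
lemma lemA (a₀ a₁ b₀ b₁ c₀ c₁ : ℂ) (d m : ℝ)
    (h0 : a₀^4 + b₀^4 + c₀^4 = 0) (h1 : a₁^4 + b₁^4 + c₁^4 = 0)
    (hma : ‖a₀‖ ≤ m) (hmb : ‖b₀‖ ≤ m) (hmc : ‖c₀‖ = m)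
    (hda : ‖a₁ - a₀‖ ≤ d) (hdb : ‖b₁ - b₀‖ ≤ d) (hdc : ‖c₁ - c₀‖ ≤ d)
    (hd0 : 0 ≤ d) (hdm : 100 * d ≤ m) (hm0 : 0 < m) :
    ∃ ζ : ℝ → ℂ, ζ 0 = c₀ ∧ ζ 1 = c₁ ∧
      (∀ t ∈ Set.Icc (0:ℝ) 1,
        (a₀ + (t:ℂ)*(a₁ - a₀))^4 + (b₀ + (t:ℂ)*(b₁ - b₀))^4 + (ζ t)^4 = 0) ∧
      (∀ t ∈ Set.Icc (0:ℝ) 1, ∀ s ∈ Set.Icc (0:ℝ) 1, ‖ζ t - ζ s‖ ≤ 14 * d * |t - s|) := by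
  have hdm' : d/m ≤ 1/100 := by
    rw [div_le_div_iff₀ hm0 (by norm_num)]; linarith
  set A : ℝ → ℂ := fun t => a₀ + (t:ℂ)*(a₁ - a₀) with hA
  set B : ℝ → ℂ := fun t => b₀ + (t:ℂ)*(b₁ - b₀) with hB
  set w : ℝ → ℂ := fun t => -(A t ^ 4 + B t ^ 4) with hw
  have hA0 : A 0 = a₀ := by simp [hA]
  have hB0 : B 0 = b₀ := by simp [hB]
  have hA1 : A 1 = a₁ := by simp [hA]
  have hB1 : B 1 = b₁ := by simp [hB]
  have hw0 : w 0 = c₀ ^ 4 := by rw [hw]; simp only [hA0, hB0]; linear_combination -h0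
  have hw1 : w 1 = c₁ ^ 4 := by rw [hw]; simp only [hA1, hB1]; linear_combination -h1
  have hwm : ‖w 0‖ = m^4 := by rw [hw0, norm_pow, hmc]
  have hw0ne : w 0 ≠ 0 := by
    intro h; rw [h, norm_zero] at hwm; nlinarith [pow_pos hm0 4]
  -- Lipschitz bounds on the linear parts
  have hAlip : ∀ t s : ℝ, ‖A t - A s‖ ≤ d * |t - s| := by
    intro t s
    have h : A t - A s = ((t:ℂ) - (s:ℂ)) * (a₁ - a₀) := by rw [hA]; ring
    have h1 : ‖(t:ℂ) - (s:ℂ)‖ = |t - s| := by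
      rw [← Complex.ofReal_sub, Complex.norm_real, Real.norm_eq_abs]
    rw [h, norm_mul, h1, mul_comm]
    exact mul_le_mul_of_nonneg_right hda (abs_nonneg _)
  have hBlip : ∀ t s : ℝ, ‖B t - B s‖ ≤ d * |t - s| := by
    intro t s
    have h : B t - B s = ((t:ℂ) - (s:ℂ)) * (b₁ - b₀) := by rw [hB]; ring
    have h1 : ‖(t:ℂ) - (s:ℂ)‖ = |t - s| := by
      rw [← Complex.ofReal_sub, Complex.norm_real, Real.norm_eq_abs]
    rw [h, norm_mul, h1, mul_comm]
    exact mul_le_mul_of_nonneg_right hdb (abs_nonneg _)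
  have habs : ∀ t ∈ Set.Icc (0:ℝ) 1, ∀ s ∈ Set.Icc (0:ℝ) 1, |t - s| ≤ 1 := by
    intro t ht s hs
    rw [abs_le]; constructor <;> [linarith [ht.1, hs.2]; linarith [ht.2, hs.1]]
  have hAbd : ∀ t ∈ Set.Icc (0:ℝ) 1, ‖A t‖ ≤ m + d := by
    intro t ht
    have h1 : ‖A t - A 0‖ ≤ d * |t - 0| := hAlip t 0
    have h2 : |t - 0| ≤ 1 := habs t ht 0 (by norm_num)
    have h3 := norm_sub_norm_le (A t) (A 0)
    rw [hA0] at h1 h3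
    nlinarith [norm_nonneg (A t - a₀)]
  have hBbd : ∀ t ∈ Set.Icc (0:ℝ) 1, ‖B t‖ ≤ m + d := by
    intro t ht
    have h1 : ‖B t - B 0‖ ≤ d * |t - 0| := hBlip t 0
    have h2 : |t - 0| ≤ 1 := habs t ht 0 (by norm_num)
    have h3 := norm_sub_norm_le (B t) (B 0)
    rw [hB0] at h1 h3
    nlinarith [norm_nonneg (B t - b₀)]
  -- quartic difference bound
  have quart : ∀ u v : ℂ, ‖u‖ ≤ m + d → ‖v‖ ≤ m + d →
      ‖u^4 - v^4‖ ≤ 4*(m+d)^3 * ‖u - v‖ := by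
    intro u v hu hv
    have hmd : (0:ℝ) ≤ m + d := by linarith
    have h : u^4 - v^4 = (u - v) * (u^3 + u^2*v + u*v^2 + v^3) := by ring
    rw [h, norm_mul, mul_comm]
    apply mul_le_mul_of_nonneg_right _ (norm_nonneg _)
    have t1 : ‖u‖^3 ≤ (m+d)^3 := pow_le_pow_left₀ (norm_nonneg u) hu 3
    have t4 : ‖v‖^3 ≤ (m+d)^3 := pow_le_pow_left₀ (norm_nonneg v) hv 3
    have t2 : ‖u‖^2*‖v‖ ≤ (m+d)^3 := by
      have := pow_le_pow_left₀ (norm_nonneg u) hu 2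
      calc ‖u‖^2*‖v‖ ≤ (m+d)^2*(m+d) :=
        mul_le_mul this hv (norm_nonneg v) (by positivity)
      _ = (m+d)^3 := by ring
    have t3 : ‖u‖*‖v‖^2 ≤ (m+d)^3 := by
      have := pow_le_pow_left₀ (norm_nonneg v) hv 2
      calc ‖u‖*‖v‖^2 ≤ (m+d)*(m+d)^2 :=
        mul_le_mul hu this (by positivity) (by positivity)
      _ = (m+d)^3 := by ring
    calc ‖u^3 + u^2*v + u*v^2 + v^3‖
        ≤ ‖u^3 + u^2*v + u*v^2‖ + ‖v^3‖ := norm_add_le _ _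
      _ ≤ ‖u^3 + u^2*v‖ + ‖u*v^2‖ + ‖v^3‖ := by
          have := norm_add_le (u^3 + u^2*v) (u*v^2); linarith
      _ ≤ ‖u^3‖ + ‖u^2*v‖ + ‖u*v^2‖ + ‖v^3‖ := by
          have := norm_add_le (u^3) (u^2*v); linarith
      _ ≤ 4*(m+d)^3 := by
          rw [norm_mul, norm_mul, norm_pow, norm_pow, norm_pow, norm_pow]
          linarith
  have hwlip : ∀ t ∈ Set.Icc (0:ℝ) 1, ∀ s ∈ Set.Icc (0:ℝ) 1,
      ‖w t - w s‖ ≤ 8*(m+d)^3 * (d * |t - s|) := by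
    intro t ht s hs
    have h : w t - w s = (A s^4 - A t^4) + (B s^4 - B t^4) := by rw [hw]; ring
    have q1 := quart (A s) (A t) (hAbd s hs) (hAbd t ht)
    have q2 := quart (B s) (B t) (hBbd s hs) (hBbd t ht)
    have hl1 : ‖A s - A t‖ ≤ d * |t - s| := by rw [abs_sub_comm]; exact hAlip s t
    have hl2 : ‖B s - B t‖ ≤ d * |t - s| := by rw [abs_sub_comm]; exact hBlip s t
    have hmd3 : (0:ℝ) ≤ 4*(m+d)^3 := by positivity
    calc ‖w t - w s‖ ≤ ‖A s^4 - A t^4‖ + ‖B s^4 - B t^4‖ := by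
          rw [h]; exact norm_add_le _ _
      _ ≤ 4*(m+d)^3 * (d * |t - s|) + 4*(m+d)^3 * (d * |t - s|) := by
          have e1 : 4*(m+d)^3 * ‖A s - A t‖ ≤ 4*(m+d)^3 * (d * |t - s|) :=
            mul_le_mul_of_nonneg_left hl1 hmd3
          have e2 : 4*(m+d)^3 * ‖B s - B t‖ ≤ 4*(m+d)^3 * (d * |t - s|) :=
            mul_le_mul_of_nonneg_left hl2 hmd3
          linarith
      _ = 8*(m+d)^3 * (d * |t - s|) := by ring
  have hnum : 8*(m+d)^3 ≤ 9 * m^3 := by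
    have h1 : m + d ≤ (101/100) * m := by linarith
    have h2 : (m+d)^3 ≤ ((101/100)*m)^3 :=
      pow_le_pow_left₀ (by linarith) h1 3
    nlinarith [pow_pos hm0 3]
  set r : ℝ → ℂ := fun t => w t / w 0 with hr
  have hrsub : ∀ t s : ℝ, r t - r s = (w t - w s) / w 0 := by
    intro t s; rw [hr]; field_simp
  have hrlip : ∀ t ∈ Set.Icc (0:ℝ) 1, ∀ s ∈ Set.Icc (0:ℝ) 1,
      ‖r t - r s‖ ≤ 9 * (d/m) * |t - s| := by
    intro t ht s hs
    rw [hrsub, norm_div, hwm, div_le_iff₀ (by positivity)]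
    calc ‖w t - w s‖ ≤ 8*(m+d)^3 * (d * |t - s|) := hwlip t ht s hs
      _ ≤ 9 * m^3 * (d * |t - s|) := by
          apply mul_le_mul_of_nonneg_right hnum (by positivity)
      _ = 9 * (d/m) * |t - s| * m^4 := by field_simp
  have hr0 : r 0 = 1 := div_self hw0ne
  have hrdev : ∀ t ∈ Set.Icc (0:ℝ) 1, ‖r t - 1‖ ≤ 9/100 := by
    intro t ht
    have h1 := hrlip t ht 0 (by norm_num)
    rw [hr0] at h1
    have h2 : |t - 0| ≤ 1 := habs t ht 0 (by norm_num)
    have h5 : (0:ℝ) ≤ 9 * (d/m) := by positivity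
    nlinarith [abs_nonneg (t - 0)]
  have hrball : ∀ t ∈ Set.Icc (0:ℝ) 1, r t ∈ Metric.closedBall (1:ℂ) (1/10) := by
    intro t ht
    rw [Metric.mem_closedBall, dist_eq_norm]
    linarith [hrdev t ht]
  have hrne : ∀ t ∈ Set.Icc (0:ℝ) 1, r t ≠ 0 := by
    intro t ht h
    have := hrdev t ht
    rw [h] at this
    simp only [zero_sub, norm_neg, norm_one] at this
    linarith
  set L : ℝ → ℂ := fun t => Complex.log (r t) with hL
  have hL0 : L 0 = 0 := by show Complex.log (r 0) = 0; rw [hr0]; exact Complex.log_one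
  have hLlip : ∀ t ∈ Set.Icc (0:ℝ) 1, ∀ s ∈ Set.Icc (0:ℝ) 1,
      ‖L t - L s‖ ≤ 18 * (d/m) * |t - s| := by
    intro t ht s hs
    calc ‖L t - L s‖ ≤ 2 * ‖r t - r s‖ := log_lip _ (hrball t ht) _ (hrball s hs)
      _ ≤ 2 * (9 * (d/m) * |t - s|) := by
          apply mul_le_mul_of_nonneg_left (hrlip t ht s hs) (by norm_num)
      _ = 18 * (d/m) * |t - s| := by ring
  have hLbd : ∀ t ∈ Set.Icc (0:ℝ) 1, ‖L t‖ ≤ 1/5 := by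
    intro t ht
    have h1 : ‖L t - L 0‖ ≤ 18 * (d/m) * |t - 0| := hLlip t ht 0 (by norm_num)
    rw [hL0, sub_zero] at h1
    have h2 : |t - 0| ≤ 1 := habs t ht 0 (by norm_num)
    have h5 : (0:ℝ) ≤ 18 * (d/m) := by positivity
    nlinarith [abs_nonneg (t - 0)]
  have hLball : ∀ t ∈ Set.Icc (0:ℝ) 1, L t / 4 ∈ Metric.closedBall (0:ℂ) (1/10) := by
    intro t ht
    rw [Metric.mem_closedBall, dist_zero_right, norm_div]
    have := hLbd t ht
    have h4 : ‖(4:ℂ)‖ = 4 := by norm_num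
    rw [h4]
    linarith
  have hzero_ball : (0:ℂ) ∈ Metric.closedBall (0:ℂ) (1/10) := by
    rw [Metric.mem_closedBall]; simp
  -- the key: the fourth power of the path
  have hzeq : ∀ t ∈ Set.Icc (0:ℝ) 1, (c₀ * Complex.exp (L t / 4))^4 = w t := by
    intro t ht
    have hexp4 : (Complex.exp (L t / 4))^4 = Complex.exp (L t) := by
      rw [← Complex.exp_nat_mul]
      congr 1
      push_cast
      ring
    rw [mul_pow, hexp4]
    show c₀^4 * Complex.exp (Complex.log (r t)) = w t
    rw [Complex.exp_log (hrne t ht), ← hw0, hr]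
    field_simp
  -- deviation from c₀
  have hzdev : ∀ t ∈ Set.Icc (0:ℝ) 1, ‖c₀ * Complex.exp (L t / 4) - c₀‖ ≤ (3/20)*m := by
    intro t ht
    have h1 : c₀ * Complex.exp (L t / 4) - c₀ = c₀ * (Complex.exp (L t / 4) - Complex.exp 0) := by
      rw [Complex.exp_zero]; ring
    rw [h1, norm_mul, hmc]
    have h2 : ‖Complex.exp (L t / 4) - Complex.exp 0‖ ≤ 3 * ‖L t / 4 - 0‖ :=
      exp_lip _ (hLball t ht) _ hzero_ball
    rw [sub_zero, norm_div] at h2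
    have h3 := hLbd t ht
    have h4 : ‖(4:ℂ)‖ = 4 := by norm_num
    rw [h4] at h2
    have : ‖Complex.exp (L t / 4) - Complex.exp 0‖ ≤ 3/20 := by linarith
    nlinarith [norm_nonneg (Complex.exp (L t / 4) - Complex.exp 0)]
  -- endpoint 1
  have hone : (1:ℝ) ∈ Set.Icc (0:ℝ) 1 := by norm_num
  have hend : c₀ * Complex.exp (L 1 / 4) = c₁ := by
    set z := c₀ * Complex.exp (L 1 / 4) with hz
    have hz4 : z^4 = c₁^4 := by rw [hz, hzeq 1 hone, hw1]
    have hfac : (z - c₁) * (z^3 + z^2*c₁ + z*c₁^2 + c₁^3) = 0 := by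
      linear_combination hz4
    have hdevz : ‖z - c₀‖ ≤ (3/20)*m := hzdev 1 hone
    have he : ‖z - c₁‖ ≤ (16/100)*m := by
      have h1 : ‖c₀ - c₁‖ ≤ d := by rw [norm_sub_rev]; exact hdc
      calc ‖z - c₁‖ = ‖(z - c₀) + (c₀ - c₁)‖ := by rw [sub_add_sub_cancel]
        _ ≤ ‖z - c₀‖ + ‖c₀ - c₁‖ := norm_add_le _ _
        _ ≤ (3/20)*m + d := by linarith
        _ ≤ (16/100)*m := by linarith
    have hc1lb : (99/100)*m ≤ ‖c₁‖ := by
      have := norm_sub_norm_le c₀ (c₀ - c₁)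
      simp only [sub_sub_cancel] at this
      have h1 : ‖c₀ - c₁‖ ≤ d := by rw [norm_sub_rev]; exact hdc
      rw [hmc] at this
      linarith
    have hc1ub : ‖c₁‖ ≤ (101/100)*m := by
      have := norm_add_le c₀ (c₁ - c₀)
      simp only [add_sub_cancel] at this
      rw [hmc] at this
      linarith
    have hzub : ‖z‖ ≤ (23/20)*m := by
      have := norm_add_le c₀ (z - c₀)
      simp only [add_sub_cancel] at this
      rw [hmc] at this
      linarith
    have hSd : ‖(z^3 + z^2*c₁ + z*c₁^2 + c₁^3) - 4*c₁^3‖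
        ≤ (16/100)*m * (((23/20)*m)^2 + 2*((23/20)*m)*((101/100)*m) + 3*((101/100)*m)^2) := by
      have hfac2 : (z^3 + z^2*c₁ + z*c₁^2 + c₁^3) - 4*c₁^3
          = (z - c₁)*(z^2 + 2*z*c₁ + 3*c₁^2) := by ring
      rw [hfac2, norm_mul]
      have hbound : ‖z^2 + 2*z*c₁ + 3*c₁^2‖
          ≤ ((23/20)*m)^2 + 2*((23/20)*m)*((101/100)*m) + 3*((101/100)*m)^2 := by
        calc ‖z^2 + 2*z*c₁ + 3*c₁^2‖ ≤ ‖z^2 + 2*z*c₁‖ + ‖3*c₁^2‖ := norm_add_le _ _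
          _ ≤ ‖z^2‖ + ‖2*z*c₁‖ + ‖3*c₁^2‖ := by
              have := norm_add_le (z^2) (2*z*c₁); linarith
          _ ≤ _ := by
              have h2 : ‖z^2‖ = ‖z‖^2 := norm_pow z 2
              have h3 : ‖2*z*c₁‖ = 2*(‖z‖*‖c₁‖) := by
                simp only [norm_mul, Complex.norm_ofNat]; ring
              have h4 : ‖3*c₁^2‖ = 3*‖c₁‖^2 := by
                simp only [norm_mul, norm_pow, Complex.norm_ofNat]
              rw [h2, h3, h4]
              have e1 : ‖z‖^2 ≤ ((23/20)*m)^2 := pow_le_pow_left₀ (norm_nonneg z) hzub 2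
              have e2 : ‖c₁‖^2 ≤ ((101/100)*m)^2 := pow_le_pow_left₀ (norm_nonneg c₁) hc1ub 2
              have e3 : ‖z‖*‖c₁‖ ≤ ((23/20)*m)*((101/100)*m) :=
                mul_le_mul hzub hc1ub (norm_nonneg c₁) (by positivity)
              nlinarith
      exact mul_le_mul he hbound (norm_nonneg _) (by positivity)
    have hSne : z^3 + z^2*c₁ + z*c₁^2 + c₁^3 ≠ 0 := by
      intro hS
      rw [hS] at hSd
      simp only [zero_sub, norm_neg] at hSd
      have h4 : ‖(4:ℂ)*c₁^3‖ = 4*‖c₁‖^3 := by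
        rw [norm_mul, norm_pow]; norm_num
      rw [h4] at hSd
      have hcube : ((99/100)*m)^3 ≤ ‖c₁‖^3 := pow_le_pow_left₀ (by positivity) hc1lb 3
      nlinarith [pow_pos hm0 3]
    rcases mul_eq_zero.mp hfac with h | h
    · exact sub_eq_zero.mp h
    · exact absurd h hSne
  refine ⟨fun t => c₀ * Complex.exp (L t / 4), ?_, hend, ?_, ?_⟩
  · show c₀ * Complex.exp (L 0 / 4) = c₀
    rw [hL0]
    norm_num
  · intro t ht
    show A t^4 + B t^4 + (c₀ * Complex.exp (L t / 4))^4 = 0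
    rw [hzeq t ht, hw]
    ring
  · intro t ht s hs
    show ‖c₀ * Complex.exp (L t / 4) - c₀ * Complex.exp (L s / 4)‖ ≤ 14 * d * |t - s|
    have h1 : c₀ * Complex.exp (L t / 4) - c₀ * Complex.exp (L s / 4)
        = c₀ * (Complex.exp (L t / 4) - Complex.exp (L s / 4)) := by ring
    rw [h1, norm_mul, hmc]
    have h2 : ‖Complex.exp (L t / 4) - Complex.exp (L s / 4)‖
        ≤ 3 * ‖L t / 4 - L s / 4‖ := exp_lip _ (hLball t ht) _ (hLball s hs)
    have h3 : ‖L t / 4 - L s / 4‖ = ‖L t - L s‖ / 4 := by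
      rw [div_sub_div_same, norm_div]
      norm_num
    have h4 := hLlip t ht s hs
    have h5 : ‖Complex.exp (L t / 4) - Complex.exp (L s / 4)‖
        ≤ (27/2) * (d/m) * |t - s| := by
      rw [h3] at h2
      nlinarith
    have h6 : m * ((27/2) * (d/m) * |t - s|) = (27/2) * d * |t - s| := by
      field_simp
    calc m * ‖Complex.exp (L t / 4) - Complex.exp (L s / 4)‖
        ≤ m * ((27/2) * (d/m) * |t - s|) :=
          mul_le_mul_of_nonneg_left h5 hm0.le
      _ = (27/2) * d * |t - s| := h6
      _ ≤ 14 * d * |t - s| := by nlinarith [abs_nonneg (t - s), mul_nonneg hd0 (abs_nonneg (t-s))]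

noncomputable def mk3 (u v w : ℂ) : EuclideanSpace ℂ (Fin 3) :=
  (WithLp.equiv 2 (Fin 3 → ℂ)).symm ![u, v, w]

@[simp] lemma mk3_apply0 (u v w : ℂ) : mk3 u v w 0 = u := rfl
@[simp] lemma mk3_apply1 (u v w : ℂ) : mk3 u v w 1 = v := rfl
@[simp] lemma mk3_apply2 (u v w : ℂ) : mk3 u v w 2 = w := rfl

lemma dist_mk3 (u1 v1 w1 u2 v2 w2 : ℂ) :
    dist (mk3 u1 v1 w1) (mk3 u2 v2 w2) ≤ ‖u1 - u2‖ + ‖v1 - v2‖ + ‖w1 - w2‖ := by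
  rw [EuclideanSpace.dist_eq]
  rw [Fin.sum_univ_three]
  simp only [mk3_apply0, mk3_apply1, mk3_apply2, dist_eq_norm]
  have h : ‖u1 - u2‖^2 + ‖v1 - v2‖^2 + ‖w1 - w2‖^2
      ≤ (‖u1 - u2‖ + ‖v1 - v2‖ + ‖w1 - w2‖)^2 := by
    nlinarith [norm_nonneg (u1-u2), norm_nonneg (v1-v2), norm_nonneg (w1-w2),
      mul_nonneg (norm_nonneg (u1-u2)) (norm_nonneg (v1-v2)),
      mul_nonneg (norm_nonneg (u1-u2)) (norm_nonneg (w1-w2)),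
      mul_nonneg (norm_nonneg (v1-v2)) (norm_nonneg (w1-w2))]
  calc Real.sqrt (‖u1 - u2‖^2 + ‖v1 - v2‖^2 + ‖w1 - w2‖^2)
      ≤ Real.sqrt ((‖u1 - u2‖ + ‖v1 - v2‖ + ‖w1 - w2‖)^2) := Real.sqrt_le_sqrt h
    _ = ‖u1 - u2‖ + ‖v1 - v2‖ + ‖w1 - w2‖ := Real.sqrt_sq (by positivity)

lemma coord_le_norm (v : EuclideanSpace ℂ (Fin 3)) (i : Fin 3) : ‖v i‖ ≤ ‖v‖ := by
  rw [EuclideanSpace.norm_eq]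
  have h : ‖v i‖ = Real.sqrt (‖v i‖^2) := (Real.sqrt_sq (norm_nonneg _)).symm
  rw [h]
  apply Real.sqrt_le_sqrt
  exact Finset.single_le_sum (f := fun j => ‖v j‖^2) (fun j _ => sq_nonneg _)
    (Finset.mem_univ i)

lemma norm_le_two_max (v : EuclideanSpace ℂ (Fin 3)) (i : Fin 3)
    (h0 : ‖v 0‖ ≤ ‖v i‖) (h1 : ‖v 1‖ ≤ ‖v i‖) (h2 : ‖v 2‖ ≤ ‖v i‖) : ‖v‖ ≤ 2 * ‖v i‖ := by
  rw [EuclideanSpace.norm_eq, Fin.sum_univ_three]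
  have hn : (0:ℝ) ≤ ‖v i‖ := norm_nonneg _
  have hb : ‖v 0‖^2 + ‖v 1‖^2 + ‖v 2‖^2 ≤ (2*‖v i‖)^2 := by
    nlinarith [norm_nonneg (v 0), norm_nonneg (v 1), norm_nonneg (v 2)]
  calc Real.sqrt (‖v 0‖^2 + ‖v 1‖^2 + ‖v 2‖^2) ≤ Real.sqrt ((2*‖v i‖)^2) :=
      Real.sqrt_le_sqrt hb
    _ = 2*‖v i‖ := Real.sqrt_sq (by positivity)

lemma exists_max_coord (v : EuclideanSpace ℂ (Fin 3)) :
    ∃ i : Fin 3, ‖v 0‖ ≤ ‖v i‖ ∧ ‖v 1‖ ≤ ‖v i‖ ∧ ‖v 2‖ ≤ ‖v i‖ := by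
  by_cases h01 : ‖v 0‖ ≤ ‖v 1‖
  · by_cases h12 : ‖v 1‖ ≤ ‖v 2‖
    · exact ⟨2, by constructor; linarith; constructor; linarith; linarith⟩
    · exact ⟨1, by constructor; linarith; constructor; linarith; linarith⟩
  · by_cases h02 : ‖v 0‖ ≤ ‖v 2‖
    · exact ⟨2, by constructor; linarith; constructor; linarith; linarith⟩
    · exact ⟨0, by constructor; linarith; constructor; linarith; linarith⟩

-- build a path in X from three coordinate functions
lemma build_path {x y : EuclideanSpace ℂ (Fin 3)} (f g h : ℝ → ℂ) {d : ℝ} (hd0 : 0 ≤ d)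
    (hf0 : f 0 = x 0) (hg0 : g 0 = x 1) (hh0 : h 0 = x 2)
    (hf1 : f 1 = y 0) (hg1 : g 1 = y 1) (hh1 : h 1 = y 2)
    (heq : ∀ t ∈ Set.Icc (0:ℝ) 1, f t^4 + g t^4 + h t^4 = 0)
    (hlip : ∀ t ∈ Set.Icc (0:ℝ) 1, ∀ s ∈ Set.Icc (0:ℝ) 1,
      ‖f t - f s‖ + ‖g t - g s‖ + ‖h t - h s‖ ≤ 16*d*|t - s|) :
    innerDist {p : EuclideanSpace ℂ (Fin 3) | (p 0) ^ 4 + (p 1) ^ 4 + (p 2) ^ 4 = 0} x y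
      ≤ ENNReal.ofReal (16*d) := by
  set γ : ℝ → EuclideanSpace ℂ (Fin 3) := fun t => mk3 (f t) (g t) (h t) with hγ
  have hlips : LipschitzOnWith (16*d).toNNReal γ (Set.Icc 0 1) := by
    apply LipschitzOnWith.of_dist_le_mul
    intro t ht s hs
    rw [Real.coe_toNNReal _ (by positivity)]
    calc dist (γ t) (γ s) ≤ ‖f t - f s‖ + ‖g t - g s‖ + ‖h t - h s‖ :=
        dist_mk3 _ _ _ _ _ _
      _ ≤ 16*d*|t - s| := hlip t ht s hs
      _ = 16*d * dist t s := by rw [Real.dist_eq]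
  apply innerDist_le_of_lip hlips
  · intro t ht
    simp only [Set.mem_setOf_eq, hγ, mk3_apply0, mk3_apply1, mk3_apply2]
    exact heq t ht
  · ext i
    fin_cases i <;> simp [hγ, hf0, hg0, hh0]
  · ext i
    fin_cases i <;> simp [hγ, hf1, hg1, hh1]

lemma lin_lip (a₀ a₁ : ℂ) {d : ℝ} (h : ‖a₁ - a₀‖ ≤ d) (t s : ℝ) :
    ‖(a₀ + (t:ℂ)*(a₁ - a₀)) - (a₀ + (s:ℂ)*(a₁ - a₀))‖ ≤ d * |t - s| := by
  have he : (a₀ + (t:ℂ)*(a₁ - a₀)) - (a₀ + (s:ℂ)*(a₁ - a₀)) = ((t:ℂ) - (s:ℂ)) * (a₁ - a₀) := by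
    ring
  have h1 : ‖(t:ℂ) - (s:ℂ)‖ = |t - s| := by
    rw [← Complex.ofReal_sub, Complex.norm_real, Real.norm_eq_abs]
  rw [he, norm_mul, h1, mul_comm]
  exact mul_le_mul_of_nonneg_right h (abs_nonneg _)

lemma max_coord3 (v : EuclideanSpace ℂ (Fin 3)) :
    (‖v 1‖ ≤ ‖v 0‖ ∧ ‖v 2‖ ≤ ‖v 0‖) ∨ (‖v 0‖ ≤ ‖v 1‖ ∧ ‖v 2‖ ≤ ‖v 1‖) ∨
    (‖v 0‖ ≤ ‖v 2‖ ∧ ‖v 1‖ ≤ ‖v 2‖) := by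
  by_cases h01 : ‖v 0‖ ≤ ‖v 1‖
  · by_cases h12 : ‖v 1‖ ≤ ‖v 2‖
    · exact Or.inr (Or.inr ⟨by linarith, by linarith⟩)
    · exact Or.inr (Or.inl ⟨by linarith, by linarith⟩)
  · by_cases h02 : ‖v 0‖ ≤ ‖v 2‖
    · exact Or.inr (Or.inr ⟨by linarith, by linarith⟩)
    · exact Or.inl ⟨by linarith, by linarith⟩

theorem stmt16 :
    IsLNE {p : EuclideanSpace ℂ (Fin 3) | (p 0) ^ 4 + (p 1) ^ 4 + (p 2) ^ 4 = 0} := by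
  refine ⟨802, by norm_num, ?_⟩
  intro x hx y hy
  simp only [Set.mem_setOf_eq] at hx hy
  set d := ‖x - y‖ with hd
  have hd0 : 0 ≤ d := norm_nonneg _
  by_cases hcase : ‖x‖ ≤ 200 * d
  · -- cone path through the origin
    set γ : ℝ → EuclideanSpace ℂ (Fin 3) :=
      fun t => if t ≤ 1/2 then ((1 - 2*t) : ℝ) • x else ((2*t - 1) : ℝ) • y with hγ
    have hyb : ‖y‖ ≤ 201 * d := by
      have h1 := norm_sub_norm_le y x
      rw [norm_sub_rev] at h1
      linarith
    have hmem : ∀ (r : ℝ) (p : EuclideanSpace ℂ (Fin 3)),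
        (p 0)^4 + (p 1)^4 + (p 2)^4 = 0 →
        ((r • p) 0)^4 + ((r • p) 1)^4 + ((r • p) 2)^4 = 0 := by
      intro r p hp
      have h : ∀ i : Fin 3, (r • p) i = (r:ℂ) * p i := by
        intro i; rw [PiLp.smul_apply, Complex.real_smul]
      rw [h 0, h 1, h 2]
      linear_combination ((r:ℂ))^4 * hp
    have hγmem : Set.MapsTo γ (Set.Icc 0 1)
        {p : EuclideanSpace ℂ (Fin 3) | (p 0) ^ 4 + (p 1) ^ 4 + (p 2) ^ 4 = 0} := by
      intro t _
      simp only [Set.mem_setOf_eq, hγ]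
      by_cases h2 : t ≤ 1/2
      · rw [if_pos h2]; exact hmem _ _ hx
      · rw [if_neg h2]; exact hmem _ _ hy
    have hγ0 : γ 0 = x := by
      simp only [hγ]
      rw [if_pos (by norm_num : (0:ℝ) ≤ 1/2)]
      norm_num
    have hγ1 : γ 1 = y := by
      simp only [hγ]
      rw [if_neg (by norm_num : ¬((1:ℝ) ≤ 1/2))]
      norm_num
    have hlip : LipschitzOnWith (802*d).toNNReal γ (Set.Icc 0 1) := by
      apply LipschitzOnWith.of_dist_le_mul
      intro t ht s hs
      rw [Real.coe_toNNReal _ (by positivity), dist_eq_norm, Real.dist_eq]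
      have habs2 : ∀ u : ℝ, |2*u| = 2*|u| := by
        intro u; rw [abs_mul]; norm_num
      rcases le_or_gt t (1/2) with h1 | h1 <;> rcases le_or_gt s (1/2) with h2 | h2
      · have he : γ t - γ s = ((2*(s - t)) : ℝ) • x := by
          simp only [hγ, if_pos h1, if_pos h2, ← sub_smul]
          congr 1
          ring
        rw [he, norm_smul, Real.norm_eq_abs, habs2, abs_sub_comm]
        nlinarith [abs_nonneg (t - s), norm_nonneg x]
      · have he : ‖γ t - γ s‖ ≤ (1 - 2*t)*‖x‖ + (2*s - 1)*‖y‖ := by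
          simp only [hγ, if_pos h1, if_neg (not_le.mpr h2)]
          calc ‖(1 - 2*t : ℝ) • x - (2*s - 1 : ℝ) • y‖
              ≤ ‖(1 - 2*t : ℝ) • x‖ + ‖(2*s - 1 : ℝ) • y‖ := norm_sub_le _ _
            _ = (1 - 2*t)*‖x‖ + (2*s - 1)*‖y‖ := by
                rw [norm_smul, norm_smul, Real.norm_eq_abs, Real.norm_eq_abs,
                  abs_of_nonneg (by linarith), abs_of_nonneg (by linarith)]
        have habs3 : |t - s| = s - t := by
          rw [abs_sub_comm, abs_of_nonneg (by linarith)]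
        rw [habs3]
        nlinarith [norm_nonneg x, norm_nonneg y]
      · have he : ‖γ t - γ s‖ ≤ (2*t - 1)*‖y‖ + (1 - 2*s)*‖x‖ := by
          simp only [hγ, if_neg (not_le.mpr h1), if_pos h2]
          calc ‖(2*t - 1 : ℝ) • y - (1 - 2*s : ℝ) • x‖
              ≤ ‖(2*t - 1 : ℝ) • y‖ + ‖(1 - 2*s : ℝ) • x‖ := norm_sub_le _ _
            _ = (2*t - 1)*‖y‖ + (1 - 2*s)*‖x‖ := by
                rw [norm_smul, norm_smul, Real.norm_eq_abs, Real.norm_eq_abs,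
                  abs_of_nonneg (by linarith), abs_of_nonneg (by linarith)]
        have habs3 : |t - s| = t - s := abs_of_nonneg (by linarith)
        rw [habs3]
        nlinarith [norm_nonneg x, norm_nonneg y]
      · have he : γ t - γ s = ((2*(t - s)) : ℝ) • y := by
          simp only [hγ, if_neg (not_le.mpr h1), if_neg (not_le.mpr h2), ← sub_smul]
          congr 1
          ring
        rw [he, norm_smul, Real.norm_eq_abs, habs2]
        nlinarith [abs_nonneg (t - s), norm_nonneg y]
    calc innerDist _ x y ≤ ENNReal.ofReal (802*d) :=
        innerDist_le_of_lip hlip hγmem hγ0 hγ1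
      _ = ENNReal.ofReal (802*d) := rfl
  · -- close points: solve for the biggest coordinate
    push_neg at hcase
    have hdiff : ∀ i : Fin 3, ‖x i - y i‖ ≤ d := by
      intro i
      have h1 := coord_le_norm (x - y) i
      rwa [PiLp.sub_apply] at h1
    have hdiff' : ∀ i : Fin 3, ‖y i - x i‖ ≤ d := by
      intro i; rw [norm_sub_rev]; exact hdiff i
    have hfin : ENNReal.ofReal (16*d) ≤ ENNReal.ofReal (802 * d) :=
      ENNReal.ofReal_le_ofReal (by nlinarith)
    rcases max_coord3 x with ⟨hk1, hk2⟩ | ⟨hk0, hk2⟩ | ⟨hk0, hk1⟩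
    · -- max coordinate is 0
      set m := ‖x 0‖ with hm
      have hxm : ‖x‖ ≤ 2*m := norm_le_two_max x 0 le_rfl hk1 hk2
      have hm0 : 0 < m := by linarith
      have hdm : 100*d ≤ m := by linarith
      obtain ⟨ζ, hζ0, hζ1, heq, hζlip⟩ := lemA (x 1) (y 1) (x 2) (y 2) (x 0) (y 0) d m
        (by linear_combination hx) (by linear_combination hy) hk1 hk2 rfl
        (hdiff' 1) (hdiff' 2) (hdiff' 0) hd0 hdm hm0
      refine le_trans (build_path ζ (fun t => x 1 + (t:ℂ)*(y 1 - x 1))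
        (fun t => x 2 + (t:ℂ)*(y 2 - x 2)) hd0 hζ0 (by push_cast; ring) (by push_cast; ring)
        hζ1 (by push_cast; ring) (by push_cast; ring)
        (fun t ht => by linear_combination heq t ht) ?_) hfin
      intro t ht s hs
      have l1 := lin_lip (x 1) (y 1) (hdiff' 1) t s
      have l2 := lin_lip (x 2) (y 2) (hdiff' 2) t s
      have l3 := hζlip t ht s hs
      linarith
    · -- max coordinate is 1
      set m := ‖x 1‖ with hm
      have hxm : ‖x‖ ≤ 2*m := norm_le_two_max x 1 hk0 le_rfl hk2
      have hm0 : 0 < m := by linarith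
      have hdm : 100*d ≤ m := by linarith
      obtain ⟨ζ, hζ0, hζ1, heq, hζlip⟩ := lemA (x 0) (y 0) (x 2) (y 2) (x 1) (y 1) d m
        (by linear_combination hx) (by linear_combination hy) hk0 hk2 rfl
        (hdiff' 0) (hdiff' 2) (hdiff' 1) hd0 hdm hm0
      refine le_trans (build_path (fun t => x 0 + (t:ℂ)*(y 0 - x 0)) ζ
        (fun t => x 2 + (t:ℂ)*(y 2 - x 2)) hd0 (by push_cast; ring) hζ0 (by push_cast; ring)
        (by push_cast; ring) hζ1 (by push_cast; ring)
        (fun t ht => by linear_combination heq t ht) ?_) hfin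
      intro t ht s hs
      have l1 := lin_lip (x 0) (y 0) (hdiff' 0) t s
      have l2 := lin_lip (x 2) (y 2) (hdiff' 2) t s
      have l3 := hζlip t ht s hs
      linarith
    · -- max coordinate is 2
      set m := ‖x 2‖ with hm
      have hxm : ‖x‖ ≤ 2*m := norm_le_two_max x 2 hk0 hk1 le_rfl
      have hm0 : 0 < m := by linarith
      have hdm : 100*d ≤ m := by linarith
      obtain ⟨ζ, hζ0, hζ1, heq, hζlip⟩ := lemA (x 0) (y 0) (x 1) (y 1) (x 2) (y 2) d m
        hx hy hk0 hk1 rfl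
        (hdiff' 0) (hdiff' 1) (hdiff' 2) hd0 hdm hm0
      refine le_trans (build_path (fun t => x 0 + (t:ℂ)*(y 0 - x 0))
        (fun t => x 1 + (t:ℂ)*(y 1 - x 1)) ζ hd0 (by push_cast; ring) (by push_cast; ring) hζ0
        (by push_cast; ring) (by push_cast; ring) hζ1
        (fun t ht => heq t ht) ?_) hfin
      intro t ht s hs
      have l1 := lin_lip (x 0) (y 0) (hdiff' 0) t s
      have l2 := lin_lip (x 1) (y 1) (hdiff' 1) t s
      have l3 := hζlip t ht s hs
      linarith
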